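/- Let σ : ℝ → ℝ be defined by σ(x) = x − 0.2·sin(2πx), and let λ := 0.4π − 1. Then for every integer n, every natural number k, and every real δ with |δ| ≤ 1/4, the k-th iterate of σ satisfies |σ^[k](n + δ) − n| ≤ λ^k·|δ|. -/
import Mathlib

/-- The error-contracting function σ(x) = x − 0.2·sin(2πx). -/
noncomputable def sigmaFn (x : ℝ) : ℝ := x - 0.2 * Real.sin (2 * Real.pi * x)

lemma sigma_key_nonneg (δ : ℝ) (h0 : 0 ≤ δ) (h : δ ≤ 1 / 4) :
    |δ - 0.2 * Real.sin (2 * Real.pi * δ)| ≤ (0.4 * Real.pi - 1) * δ := by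
  have hpi3 := Real.pi_gt_three
  have hpi := Real.pi_pos
  have hs_le : Real.sin (2 * Real.pi * δ) ≤ 2 * Real.pi * δ := Real.sin_le (by positivity)
  have hs_ge : 2 / Real.pi * (2 * Real.pi * δ) ≤ Real.sin (2 * Real.pi * δ) := by
    apply Real.mul_le_sin (by positivity)
    nlinarith
  have h4 : 4 * δ ≤ Real.sin (2 * Real.pi * δ) := by
    have he : 2 / Real.pi * (2 * Real.pi * δ) = 4 * δ := by field_simp; ring
    linarith [he ▸ hs_ge]
  rw [abs_le]
  constructor <;> nlinarith

lemma sigma_key (δ : ℝ) (h : |δ| ≤ 1 / 4) :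
    |δ - 0.2 * Real.sin (2 * Real.pi * δ)| ≤ (0.4 * Real.pi - 1) * |δ| := by
  rcases le_or_gt 0 δ with hd | hd
  · rw [abs_of_nonneg hd] at h ⊢
    exact sigma_key_nonneg δ hd h
  · rw [abs_of_neg hd] at h ⊢
    have := sigma_key_nonneg (-δ) (by linarith) h
    simp only [mul_neg, Real.sin_neg] at this
    rw [show -δ - -(0.2 * Real.sin (2 * Real.pi * δ)) = -(δ - 0.2 * Real.sin (2 * Real.pi * δ))
      by ring, abs_neg] at this
    linarith

/-- Every point within 1/4 of an integer n converges to n under iteration of σ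
at geometric rate λ = 0.4π − 1. -/
theorem sigma_iterate_contraction :
    ∀ (n : ℤ) (k : ℕ) (δ : ℝ), |δ| ≤ 1 / 4 →
      |sigmaFn^[k] ((n : ℝ) + δ) - (n : ℝ)| ≤ (0.4 * Real.pi - 1) ^ k * |δ| := by
  intro n k
  induction k with
  | zero => intro δ h; simp
  | succ k ih =>
    intro δ h
    have hpi3 := Real.pi_gt_three
    have hpi4 := Real.pi_lt_d2
    have hlam0 : (0:ℝ) ≤ 0.4 * Real.pi - 1 := by nlinarith
    have hlam1 : 0.4 * Real.pi - 1 ≤ 1 := by nlinarith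
    set δ' := δ - 0.2 * Real.sin (2 * Real.pi * δ) with hδ'
    have hstep : sigmaFn ((n : ℝ) + δ) = (n : ℝ) + δ' := by
      unfold sigmaFn
      have : 2 * Real.pi * ((n : ℝ) + δ) = 2 * Real.pi * δ + (n : ℤ) * (2 * Real.pi) := by
        ring
      rw [this, Real.sin_add_int_mul_two_pi]
      ring
    have hkey : |δ'| ≤ (0.4 * Real.pi - 1) * |δ| := sigma_key δ h
    have hδ'small : |δ'| ≤ 1 / 4 := by
      calc |δ'| ≤ (0.4 * Real.pi - 1) * |δ| := hkey
        _ ≤ 1 * (1 / 4) := by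
            apply mul_le_mul hlam1 h (abs_nonneg _) (by norm_num)
        _ = 1 / 4 := by norm_num
    calc |sigmaFn^[k+1] ((n : ℝ) + δ) - (n : ℝ)|
        = |sigmaFn^[k] ((n : ℝ) + δ') - (n : ℝ)| := by
          rw [Function.iterate_succ_apply, hstep]
      _ ≤ (0.4 * Real.pi - 1) ^ k * |δ'| := ih δ' hδ'small
      _ ≤ (0.4 * Real.pi - 1) ^ k * ((0.4 * Real.pi - 1) * |δ|) := by
          exact mul_le_mul_of_nonneg_left hkey (by positivity)
      _ = (0.4 * Real.pi - 1) ^ (k+1) * |δ| := by ring
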